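/- Let e ≠ f be distinct elements of B, both admitting (2,0,2/5)-decompositions. Then exactly one of the following holds: (1) (e|f) = 0 and e·f = 0; (2) (e|f) = 1/25, σ_e f = σ_f e = e + f − 5 e·f, e·f = (1/5)(e + f − σ_e f), and the three elements e, f, σ_e f are linearly independent. -/

import Mathlib

/-! Write `f = (5/2)(e|f) e + a + u` with `a ∈ B_e(0)` and `u ∈ B_e(2/5)`, so that
`e·f = 5(e|f) e + (2/5) u` and `σ_e f = f - 2u`. Projecting `f·f = 2f` onto `B_e(2/5)` with the
fusion rules gives `a·u = (1 - (e|f)) u`, hence `f·u = u + u·u`. Comparing the two expressions of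
`e·f = f·e` shows that the `2/5`-component of `e` for `f` is `u + (25/2)(e|f)(e - f)`; its
eigenvalue equation, projected onto `B_e(2/5)`, reads `(3/5)(1 - 25(e|f)) u = 0`. If `u = 0`, the
same equation paired with `e` leaves `(e|f) ∈ {0, 2/5}`, and `2/5` forces `e = f`. Otherwise
`(e|f) = 1/25`, `a ≠ 0` because `a·u = (24/25) u`, and the rest is linear algebra. -/

/-- A commutative (not necessarily associative) real algebra with a symmetric
invariant bilinear form, modelling the Griess algebra of an OZ-type VOA. -/
structure GriessAlg (B : Type*) [AddCommGroup B] [Module ℝ B] where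
  mul : B →ₗ[ℝ] B →ₗ[ℝ] B
  bf : B →ₗ[ℝ] B →ₗ[ℝ] ℝ
  comm : ∀ x y, mul x y = mul y x
  symm : ∀ x y, bf x y = bf y x
  invariant : ∀ x y z, bf (mul x y) z = bf x (mul y z)

/-- A `(2,0,2/5)`-decomposition for `e`: `B` is the internal direct sum of the
eigenspaces of `x ↦ e·x` for eigenvalues `2`, `0`, `2/5` (with projections
`pi2`, `pi0`, `piq`), the `2`-eigenspace is `ℝ e`, `e·e = 2e`, `(e|e) = 2/5`,
and the fusion rules hold. -/
structure Decomp {B : Type*} [AddCommGroup B] [Module ℝ B] (G : GriessAlg B) (e : B) where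
  pi2 : B →ₗ[ℝ] B
  pi0 : B →ₗ[ℝ] B
  piq : B →ₗ[ℝ] B
  sum_eq : ∀ x, pi2 x + pi0 x + piq x = x
  eig2 : ∀ x, G.mul e (pi2 x) = (2 : ℝ) • pi2 x
  eig0 : ∀ x, G.mul e (pi0 x) = 0
  eigq : ∀ x, G.mul e (piq x) = (2/5 : ℝ) • piq x
  proj2 : ∀ x, G.mul e x = (2 : ℝ) • x → pi2 x = x
  proj0 : ∀ x, G.mul e x = 0 → pi0 x = x
  projq : ∀ x, G.mul e x = (2/5 : ℝ) • x → piq x = x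
  span2 : ∀ x, ∃ c : ℝ, pi2 x = c • e
  mul_ee : G.mul e e = (2 : ℝ) • e
  bf_ee : G.bf e e = 2/5
  fusion00 : ∀ x y, G.mul e x = 0 → G.mul e y = 0 → piq (G.mul x y) = 0
  fusion0q : ∀ x y, G.mul e x = 0 → G.mul e y = (2/5 : ℝ) • y →
    G.mul e (G.mul x y) = (2/5 : ℝ) • G.mul x y
  fusionqq : ∀ x y, G.mul e x = (2/5 : ℝ) • x → G.mul e y = (2/5 : ℝ) • y →
    piq (G.mul x y) = 0

/-- The σ-involution attached to a `(2,0,2/5)`-decomposition: `+1` on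
`B_e(2) ⊕ B_e(0)` and `-1` on `B_e(2/5)`. -/
def Decomp.sigma {B : Type*} [AddCommGroup B] [Module ℝ B] {G : GriessAlg B} {e : B}
    (D : Decomp G e) : B →ₗ[ℝ] B :=
  D.pi2 + D.pi0 - D.piq

namespace GriessAlg

variable {B : Type*} [AddCommGroup B] [Module ℝ B] (G : GriessAlg B)

theorem bf_mul_left (e x y : B) : G.bf (G.mul e x) y = G.bf x (G.mul e y) := by
  rw [G.comm, G.invariant]

theorem bf_eq_zero_of_eigen {e x y : B} {α β : ℝ} (hαβ : α ≠ β)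
    (hx : G.mul e x = α • x) (hy : G.mul e y = β • y) : G.bf x y = 0 := by
  have h := G.bf_mul_left e x y
  rw [hx, hy, map_smul, map_smul, LinearMap.smul_apply, smul_eq_mul, smul_eq_mul] at h
  have h' : (α - β) * G.bf x y = 0 := by linear_combination h
  exact (mul_eq_zero.mp h').resolve_left (sub_ne_zero.mpr hαβ)

end GriessAlg

namespace Decomp

variable {B : Type*} [AddCommGroup B] [Module ℝ B] {G : GriessAlg B} {e : B}

theorem ne_zero (D : Decomp G e) : e ≠ 0 := by
  rintro rfl
  have h := D.bf_ee
  rw [map_zero] at h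
  norm_num at h

theorem bf_self_of_mul_eq_zero (D : Decomp G e) {x : B} (h : G.mul e x = 0) : G.bf e x = 0 :=
  G.bf_eq_zero_of_eigen two_ne_zero D.mul_ee (by rw [h, zero_smul])

theorem bf_self_of_mul_eq_smul (D : Decomp G e) {x : B} (h : G.mul e x = (2/5 : ℝ) • x) :
    G.bf e x = 0 :=
  G.bf_eq_zero_of_eigen (by norm_num) D.mul_ee h

theorem pi2_eq (D : Decomp G e) (x : B) : D.pi2 x = ((5/2) * G.bf e x) • e := by
  obtain ⟨c, hc⟩ := D.span2 x
  have h := congrArg (G.bf e) (D.sum_eq x)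
  rw [map_add, map_add, hc, map_smul, D.bf_ee, D.bf_self_of_mul_eq_zero (D.eig0 x),
    D.bf_self_of_mul_eq_smul (D.eigq x)] at h
  rw [hc, ← h, smul_eq_mul]
  congr 1
  ring

theorem eq_add (D : Decomp G e) (x : B) : x = ((5/2) * G.bf e x) • e + D.pi0 x + D.piq x := by
  rw [← D.pi2_eq, D.sum_eq]

theorem mul_eq (D : Decomp G e) (x : B) :
    G.mul e x = (5 * G.bf e x) • e + (2/5 : ℝ) • D.piq x := by
  conv_lhs => rw [D.eq_add x]
  rw [map_add, map_add, map_smul, D.mul_ee, D.eig0, D.eigq]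
  module

theorem piq_self (D : Decomp G e) : D.piq e = 0 := by
  have h := D.mul_eq e
  rw [D.mul_ee, D.bf_ee] at h
  linear_combination (norm := module) (-5/2 : ℝ) • h

theorem pi0_self (D : Decomp G e) : D.pi0 e = 0 := by
  have h := D.eq_add e
  rw [D.bf_ee, D.piq_self] at h
  linear_combination (norm := module) -h

theorem piq_of_mul_eq_zero (D : Decomp G e) {x : B} (h : G.mul e x = 0) : D.piq x = 0 := by
  have hx := D.eq_add x
  rw [D.bf_self_of_mul_eq_zero h, D.proj0 x h] at hx
  linear_combination (norm := module) -hx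

theorem pi0_of_mul_eq_smul (D : Decomp G e) {x : B} (h : G.mul e x = (2/5 : ℝ) • x) :
    D.pi0 x = 0 := by
  have hx := D.eq_add x
  rw [D.bf_self_of_mul_eq_smul h, D.projq x h] at hx
  linear_combination (norm := module) -hx

theorem piq_piq (D : Decomp G e) (x : B) : D.piq (D.piq x) = D.piq x :=
  D.projq _ (D.eigq x)

theorem sigma_apply (D : Decomp G e) (x : B) : D.sigma x = x - (2 : ℝ) • D.piq x := by
  simp only [sigma, LinearMap.sub_apply, LinearMap.add_apply]
  linear_combination (norm := module) D.sum_eq x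

theorem piq_sigma (D : Decomp G e) (x : B) : D.piq (D.sigma x) = -D.piq x := by
  rw [sigma_apply, map_sub, map_smul, piq_piq]
  module

theorem pi0_sigma (D : Decomp G e) (x : B) : D.pi0 (D.sigma x) = D.pi0 x := by
  rw [sigma_apply, map_sub, map_smul, D.pi0_of_mul_eq_smul (D.eigq x), smul_zero, sub_zero]

theorem linearIndependent_sigma (D : Decomp G e) {x : B} (h0 : D.pi0 x ≠ 0) (hq : D.piq x ≠ 0) :
    LinearIndependent ℝ ![e, x, D.sigma x] := by
  rw [Fintype.linearIndependent_iff]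
  intro g hg
  simp only [Fin.sum_univ_three, Matrix.cons_val_zero, Matrix.cons_val_one,
    Matrix.cons_val_two, Matrix.head_cons, Matrix.tail_cons] at hg
  have hgq := congrArg D.piq hg
  have hg0 := congrArg D.pi0 hg
  simp only [map_add, map_smul, map_zero, D.piq_self, D.piq_sigma, D.pi0_self,
    D.pi0_sigma] at hgq hg0
  have hsub : g 1 - g 2 = 0 :=
    (smul_eq_zero.mp (by linear_combination (norm := module) hgq)).resolve_right hq
  have hadd : g 1 + g 2 = 0 :=
    (smul_eq_zero.mp (by linear_combination (norm := module) hg0)).resolve_right h0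
  have h1 : g 1 = 0 := by linarith
  have h2 : g 2 = 0 := by linarith
  rw [h1, h2, zero_smul, zero_smul, add_zero, add_zero] at hg
  have h0 : g 0 = 0 := (smul_eq_zero.mp hg).resolve_right D.ne_zero
  intro i
  fin_cases i <;> assumption

variable {f : B}

theorem mul_pi0_piq (D : Decomp G e) (hff : G.mul f f = (2 : ℝ) • f) :
    G.mul (D.pi0 f) (D.piq f) = (1 - G.bf e f) • D.piq f := by
  have hf := D.eq_add f
  have hea := D.eig0 f
  have heu := D.eigq f
  have hqa := D.piq_of_mul_eq_zero hea
  have hqu := D.piq_piq f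
  generalize D.pi0 f = a at *
  generalize D.piq f = u at *
  generalize G.bf e f = t at *
  subst hf
  have h := congrArg D.piq hff
  simp only [map_add, map_smul, LinearMap.add_apply, LinearMap.smul_apply, D.mul_ee, G.comm a e,
    G.comm u e, G.comm u a, hea, heu, D.piq_self, hqa, hqu, D.fusion00 a a hea hea,
    D.projq _ (D.fusion0q a u hea heu), D.fusionqq u u heu heu, map_zero, smul_zero] at h
  linear_combination (norm := module) (1/2 : ℝ) • h

theorem mul_piq (D : Decomp G e) (hff : G.mul f f = (2 : ℝ) • f) :
    G.mul f (D.piq f) = D.piq f + G.mul (D.piq f) (D.piq f) := by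
  nth_rewrite 1 [D.eq_add f]
  simp only [map_add, map_smul, LinearMap.add_apply, LinearMap.smul_apply, D.eigq,
    D.mul_pi0_piq hff]
  module

theorem piq_eq_piq_add (De : Decomp G e) (Df : Decomp G f) :
    Df.piq e = De.piq f + (25/2 * G.bf e f) • (e - f) := by
  have h := Df.mul_eq e
  rw [G.comm, De.mul_eq f, G.symm f e] at h
  linear_combination (norm := module) (-5/2 : ℝ) • h

theorem eigq_piq_eq_piq_add (De : Decomp G e) (Df : Decomp G f) :
    (125/2 * G.bf e f ^ 2 - 5 * G.bf e f) • e - (20 * G.bf e f) • f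
      + (5 * G.bf e f + 3/5) • De.piq f + G.mul (De.piq f) (De.piq f) = 0 := by
  have h := Df.eigq e
  rw [piq_eq_piq_add De Df] at h
  simp only [map_add, map_smul, map_sub, G.comm f e, De.mul_eq f, Df.mul_ee,
    De.mul_piq Df.mul_ee] at h
  linear_combination (norm := module) h

theorem piq_eq_zero_or_bf_eq (De : Decomp G e) (Df : Decomp G f) :
    De.piq f = 0 ∨ G.bf e f = 1/25 := by
  have h := congrArg De.piq (eigq_piq_eq_piq_add De Df)
  simp only [map_add, map_sub, map_smul, map_zero, De.piq_self, De.piq_piq,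
    De.fusionqq _ _ (De.eigq f) (De.eigq f)] at h
  have h' : (3/5 * (1 - 25 * G.bf e f)) • De.piq f = 0 := by
    linear_combination (norm := module) h
  rcases smul_eq_zero.mp h' with ht | hu
  · right; linarith
  · left; exact hu

theorem bf_eq_zero_of_piq_eq_zero (De : Decomp G e) (Df : Decomp G f) (hef : e ≠ f)
    (hu : De.piq f = 0) : G.bf e f = 0 := by
  have h := eigq_piq_eq_piq_add De Df
  rw [hu, map_zero, smul_zero, add_zero, add_zero] at h
  have hbf := congrArg (G.bf e) h
  simp only [map_sub, map_smul, map_zero, De.bf_ee, smul_eq_mul] at hbf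
  have ht : G.bf e f * (G.bf e f - 2/5) = 0 := by linear_combination (1/5 : ℝ) * hbf
  rcases mul_eq_zero.mp ht with ht | ht
  · exact ht
  · rw [sub_eq_zero.mp ht] at h
    have h8 : (8 : ℝ) • (e - f) = 0 := by linear_combination (norm := module) h
    exact absurd (sub_eq_zero.mp ((smul_eq_zero.mp h8).resolve_left (by norm_num))) hef

end Decomp

/-- dichotomy for two distinct elements admitting
`(2,0,2/5)`-decompositions: exactly one of the two alternatives holds. -/
theorem stmt_3 {B : Type*} [AddCommGroup B] [Module ℝ B] (G : GriessAlg B)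
    (e f : B) (hef : e ≠ f) (De : Decomp G e) (Df : Decomp G f) :
    Xor'
      (G.bf e f = 0 ∧ G.mul e f = 0)
      (G.bf e f = 1/25 ∧ De.sigma f = Df.sigma e ∧
        De.sigma f = e + f - (5 : ℝ) • G.mul e f ∧
        G.mul e f = (1/5 : ℝ) • (e + f - De.sigma f) ∧
        LinearIndependent ℝ ![e, f, De.sigma f]) := by
  rcases eq_or_ne (De.piq f) 0 with hu | hu
  · have ht := Decomp.bf_eq_zero_of_piq_eq_zero De Df hef hu
    refine Or.inl ⟨⟨ht, ?_⟩, fun h => by norm_num [ht] at h⟩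
    rw [De.mul_eq, ht, hu]
    module
  · have ht := (Decomp.piq_eq_zero_or_bf_eq De Df).resolve_left hu
    have ha : De.pi0 f ≠ 0 := by
      intro ha
      have h := De.mul_pi0_piq Df.mul_ee
      rw [ha, map_zero, LinearMap.zero_apply, ht] at h
      exact hu ((smul_eq_zero.mp h.symm).resolve_left (by norm_num))
    refine Or.inr ⟨⟨ht, ?_, ?_, ?_, De.linearIndependent_sigma ha hu⟩,
      fun h => by norm_num [ht] at h⟩
    · rw [De.sigma_apply, Df.sigma_apply, Decomp.piq_eq_piq_add De Df, ht]
      module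
    · rw [De.sigma_apply, De.mul_eq, ht]
      module
    · rw [De.sigma_apply, De.mul_eq, ht]
      module
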